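/- Let Ω ⊆ ℝ³ be open, let ρ : Ω → ℝ be smooth with ρ > 0, and let s : Ω → ℝ³ be a smooth vector field with |s| = 1 everywhere and ∇·(ρ·s) = 0 on Ω. Define the helicity density h_s = s·(∇×s). Then the pointwise identity ρ·[((∇log ρ)×s + ∇×s)·∇]s = ∇(ρ·h_s) + ρ·s×[Δs + ((∇log ρ)·∇)s] − (s·∇)(ρ·∇×s) + s×∇(s·∇ρ) holds on Ω, where for a vector field v the expression (v·∇)s denotes the vector field with components Σ_j v_j ∂_j s^k, Δs is applied componentwise, and × is the cross product in ℝ³. -/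

import Mathlib

/-!
Write `ω = ∇×s` and `a = ∇log ρ`. Expanding `∇(ρ h_s)` with `∇(s·ω) = (s·∇)ω + (ω·∇)s + s×(∇×ω)`
and `∇×ω = ∇(∇·s) - Δs`, all second derivatives of `s` cancel against `-(s·∇)(ρω)` and
`ρ s×Δs`, except `ρ s×∇(∇·s)`. Differentiating the constraint `s·∇ρ + ρ ∇·s = 0` turns that
term into `-s×∇(s·∇ρ) - (∇·s) s×∇ρ`. What is left is first order in `s`: the columns of the
Jacobian `J` of `s` are orthogonal to `s` because `|s|` is constant, and for such `J`,
`J(a×s) = s×(Ja) + (s·ω) a + (∇·s)(a×s) - (a·s) ω` for every vector `a`.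
-/

open Real

noncomputable section

/-- Partial derivative of a scalar function on ℝ³ in the `i`-th coordinate direction. -/
noncomputable def pd (i : Fin 3) (f : (Fin 3 → ℝ) → ℝ) (x : Fin 3 → ℝ) : ℝ :=
  fderiv ℝ f x (Pi.single i 1)

/-- Gradient of a scalar function on ℝ³. -/
noncomputable def grad3 (f : (Fin 3 → ℝ) → ℝ) (x : Fin 3 → ℝ) : Fin 3 → ℝ :=
  fun i => pd i f x

/-- Divergence of a vector field on ℝ³. -/
noncomputable def div3 (v : (Fin 3 → ℝ) → (Fin 3 → ℝ)) (x : Fin 3 → ℝ) : ℝ :=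
  ∑ i, pd i (fun y => v y i) x

/-- Curl of a vector field on ℝ³. -/
noncomputable def curl3 (v : (Fin 3 → ℝ) → (Fin 3 → ℝ)) (x : Fin 3 → ℝ) : Fin 3 → ℝ :=
  ![pd 1 (fun y => v y 2) x - pd 2 (fun y => v y 1) x,
    pd 2 (fun y => v y 0) x - pd 0 (fun y => v y 2) x,
    pd 0 (fun y => v y 1) x - pd 1 (fun y => v y 0) x]

/-- Euclidean Laplacian of a scalar function on ℝ³. -/
noncomputable def lap (f : (Fin 3 → ℝ) → ℝ) (x : Fin 3 → ℝ) : ℝ :=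
  ∑ i, pd i (fun y => pd i f y) x

/-- Cross product on ℝ³ (as `Fin 3 → ℝ`). -/
def cross3 (a b : Fin 3 → ℝ) : Fin 3 → ℝ :=
  ![a 1 * b 2 - a 2 * b 1, a 2 * b 0 - a 0 * b 2, a 0 * b 1 - a 1 * b 0]

open Filter Topology

section PartialDerivatives

variable {f g : (Fin 3 → ℝ) → ℝ} {x : Fin 3 → ℝ} {i j : Fin 3}

theorem pd_congr_of_eventuallyEq (h : f =ᶠ[𝓝 x] g) : pd j f x = pd j g x := by
  simp only [pd, h.fderiv_eq]

theorem pd_eq_zero_of_eventuallyEq_const {c : ℝ} (h : f =ᶠ[𝓝 x] fun _ => c) : pd j f x = 0 := by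
  rw [pd_congr_of_eventuallyEq h]
  simp [pd]

theorem pd_add (hf : DifferentiableAt ℝ f x) (hg : DifferentiableAt ℝ g x) :
    pd j (fun y => f y + g y) x = pd j f x + pd j g x := by
  simp [pd, fderiv_fun_add hf hg]

theorem pd_sub (hf : DifferentiableAt ℝ f x) (hg : DifferentiableAt ℝ g x) :
    pd j (fun y => f y - g y) x = pd j f x - pd j g x := by
  simp [pd, fderiv_fun_sub hf hg]

theorem pd_mul (hf : DifferentiableAt ℝ f x) (hg : DifferentiableAt ℝ g x) :
    pd j (fun y => f y * g y) x = pd j f x * g x + f x * pd j g x := by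
  simp [pd, fderiv_fun_mul hf hg]
  ring

theorem pd_sum {F : Fin 3 → (Fin 3 → ℝ) → ℝ} (hF : ∀ i, DifferentiableAt ℝ (F i) x) :
    pd j (fun y => ∑ i, F i y) x = ∑ i, pd j (F i) x := by
  simp [pd, fderiv_fun_sum fun i _ => hF i]

theorem pd_log (hf : DifferentiableAt ℝ f x) (hx : f x ≠ 0) :
    pd j (fun y => Real.log (f y)) x = pd j f x / f x := by
  simp [pd, (hf.hasFDerivAt.log hx).fderiv]
  field_simp

theorem differentiableAt_pd (hf : ContDiffAt ℝ 2 f x) : DifferentiableAt ℝ (pd j f) x :=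
  ((hf.fderiv_right (m := 1) (by norm_num)).clm_apply contDiffAt_const).differentiableAt
    one_ne_zero

theorem pd_pd_comm (hf : ContDiffAt ℝ 2 f x) : pd i (pd j f) x = pd j (pd i f) x := by
  have hd : DifferentiableAt ℝ (fderiv ℝ f) x :=
    (hf.fderiv_right (m := 1) (by norm_num)).differentiableAt one_ne_zero
  have hpd : ∀ u v, pd v (pd u f) x = fderiv ℝ (fderiv ℝ f) x (Pi.single v 1) (Pi.single u 1) :=
    fun u v => by
      show fderiv ℝ (fun y => fderiv ℝ f y (Pi.single u 1)) x _ = _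
      simp [fderiv_clm_apply hd (differentiableAt_const _)]
  rw [hpd, hpd]
  exact hf.isSymmSndFDerivAt (by simp) _ _

end PartialDerivatives

section VectorCalculus

open Matrix in
theorem cross3_eq_crossProduct (a b : Fin 3 → ℝ) : cross3 a b = a ⨯₃ b := rfl

variable {u v s : (Fin 3 → ℝ) → Fin 3 → ℝ} {x : Fin 3 → ℝ}

theorem cross3_curl3_apply (w : Fin 3 → ℝ) (k : Fin 3) :
    cross3 w (curl3 v x) k = ∑ i, w i * (pd k (fun y => v y i) x - pd i (fun y => v y k) x) := by
  fin_cases k <;> simp [cross3, curl3, Fin.sum_univ_three] <;> ring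

theorem pd_sum_mul (hu : ∀ i, DifferentiableAt ℝ (fun y => u y i) x)
    (hv : ∀ i, DifferentiableAt ℝ (fun y => v y i) x) (k : Fin 3) :
    pd k (fun y => ∑ i, u y i * v y i) x
      = ∑ i, (pd k (fun y => u y i) x * v x i + u x i * pd k (fun y => v y i) x) := by
  rw [pd_sum (F := fun i y => u y i * v y i) fun i => (hu i).mul (hv i)]
  exact Finset.sum_congr rfl fun i _ => pd_mul (hu i) (hv i)

theorem differentiableAt_curl3 (hs : ∀ i, ContDiffAt ℝ 2 (fun y => s y i) x) (k : Fin 3) :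
    DifferentiableAt ℝ (fun y => curl3 s y k) x := by
  fin_cases k <;> exact (differentiableAt_pd (hs _)).fun_sub (differentiableAt_pd (hs _))

theorem pd_sum_mul_curl3 (hs : ∀ i, ContDiffAt ℝ 2 (fun y => s y i) x) (k : Fin 3) :
    pd k (fun y => ∑ i, s y i * curl3 s y i) x
      = ∑ j, s x j * pd j (fun y => curl3 s y k) x + ∑ j, curl3 s x j * pd j (fun y => s y k) x
        + cross3 (s x) (curl3 (curl3 s) x) k := by
  have hs1 i := (hs i).differentiableAt two_ne_zero
  have hωω : cross3 (curl3 s x) (curl3 s x) k = 0 := by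
    fin_cases k <;> simp [cross3] <;> ring
  rw [pd_sum_mul hs1 (differentiableAt_curl3 hs), cross3_curl3_apply]
  rw [cross3_curl3_apply] at hωω
  simp only [Fin.sum_univ_three] at hωω ⊢
  linear_combination hωω

theorem curl3_curl3 (hs : ∀ i, ContDiffAt ℝ 2 (fun y => s y i) x) :
    curl3 (curl3 s) x = grad3 (div3 s) x - fun l => lap (fun y => s y l) x := by
  have hd i j : DifferentiableAt ℝ (pd j fun y => s y i) x := differentiableAt_pd (hs i)
  have hdiv l : pd l (div3 s) x = ∑ i, pd l (pd i fun y => s y i) x := pd_sum fun i => hd i i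
  ext l
  have hcomm j : pd j (pd l fun y => s y j) x = pd l (pd j fun y => s y j) x := pd_pd_comm (hs j)
  fin_cases l <;> simp only [Fin.zero_eta, Fin.mk_one, Fin.reduceFinMk] at hcomm <;>
  simp [curl3, grad3, lap, hdiv, pd_sub (hd _ _) (hd _ _), Fin.sum_univ_three, hcomm] <;> ring

theorem sum_cross3_mul_pd_of_sum_mul_pd_eq_zero (a : Fin 3 → ℝ)
    (horth : ∀ j, ∑ i, s x i * pd j (fun y => s y i) x = 0) (k : Fin 3) :
    ∑ j, cross3 a (s x) j * pd j (fun y => s y k) x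
      = cross3 (s x) (fun l => ∑ j, a j * pd j (fun y => s y l) x) k
        + (∑ i, s x i * curl3 s x i) * a k - div3 s x * cross3 (s x) a k
        - (∑ i, a i * s x i) * curl3 s x k := by
  have h0 := horth 0
  have h1 := horth 1
  have h2 := horth 2
  simp only [Fin.sum_univ_three] at h0 h1 h2
  -- the two sides differ by the `k`-th component of `a × Jᵀs`, where `J` is the Jacobian of `s`
  fin_cases k <;> simp [cross3, curl3, div3, Fin.sum_univ_three]
  · linear_combination a 2 * h1 - a 1 * h2
  · linear_combination a 0 * h2 - a 2 * h0
  · linear_combination a 1 * h0 - a 0 * h1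

end VectorCalculus

section Constraints

variable {s : (Fin 3 → ℝ) → Fin 3 → ℝ} {ρ : (Fin 3 → ℝ) → ℝ} {x : Fin 3 → ℝ}

theorem sum_mul_pd_eq_zero_of_sum_sq_eq_const {c : ℝ}
    (hs : ∀ i, DifferentiableAt ℝ (fun y => s y i) x)
    (hc : ∀ᶠ y in 𝓝 x, ∑ i, s y i ^ 2 = c) (j : Fin 3) :
    ∑ i, s x i * pd j (fun y => s y i) x = 0 := by
  have h := pd_sum_mul hs hs j
  rw [pd_eq_zero_of_eventuallyEq_const (hc.mono fun y hy => by simpa only [sq] using hy)] at h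
  simp only [Fin.sum_univ_three] at h ⊢
  linarith

theorem div3_mul (hρ : DifferentiableAt ℝ ρ x) (hs : ∀ i, DifferentiableAt ℝ (fun y => s y i) x) :
    div3 (fun y i => ρ y * s y i) x = ∑ j, s x j * pd j ρ x + ρ x * div3 s x := by
  simp only [div3, pd_mul hρ (hs _), Finset.sum_add_distrib, Finset.mul_sum]
  simp only [mul_comm]

theorem smul_grad3_div3_of_div3_mul_eq_zero (hρ : ContDiffAt ℝ 2 ρ x)
    (hs : ∀ i, ContDiffAt ℝ 2 (fun y => s y i) x)
    (hdiv : ∀ᶠ y in 𝓝 x, div3 (fun y i => ρ y * s y i) y = 0) :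
    ρ x • grad3 (div3 s) x = -grad3 (fun y => ∑ j, s y j * pd j ρ y) x - div3 s x • grad3 ρ x := by
  have hzero : (fun y => ∑ j, s y j * pd j ρ y + ρ y * div3 s y) =ᶠ[𝓝 x] fun _ => 0 := by
    filter_upwards [hdiv, hρ.eventually (by simp),
      eventually_all.2 fun i => (hs i).eventually (by simp)] with y hy hρy hsy
    rwa [div3_mul (hρy.differentiableAt two_ne_zero)
      fun i => (hsy i).differentiableAt two_ne_zero] at hy
  have hD : DifferentiableAt ℝ (fun y => ∑ j, s y j * pd j ρ y) x :=
    DifferentiableAt.fun_sum fun j _ =>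
      ((hs j).differentiableAt two_ne_zero).mul (differentiableAt_pd hρ)
  have hdivs : DifferentiableAt ℝ (div3 s) x :=
    DifferentiableAt.fun_sum fun i _ => differentiableAt_pd (hs i)
  have hρ1 := hρ.differentiableAt two_ne_zero
  ext l
  have h := pd_eq_zero_of_eventuallyEq_const (j := l) hzero
  rw [pd_add (g := fun y => ρ y * div3 s y) hD (hρ1.mul hdivs), pd_mul hρ1 hdivs] at h
  simp only [grad3, Pi.smul_apply, Pi.sub_apply, Pi.neg_apply, smul_eq_mul]
  linarith

end Constraints

theorem spin_advection_identity_at {ρ : (Fin 3 → ℝ) → ℝ} {s : (Fin 3 → ℝ) → Fin 3 → ℝ}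
    {x : Fin 3 → ℝ} {c : ℝ} (hρ : ContDiffAt ℝ 2 ρ x) (hρx : ρ x ≠ 0)
    (hs : ∀ i, ContDiffAt ℝ 2 (fun y => s y i) x) (hc : ∀ᶠ y in 𝓝 x, ∑ i, s y i ^ 2 = c)
    (hdiv : ∀ᶠ y in 𝓝 x, div3 (fun y i => ρ y * s y i) y = 0) (k : Fin 3) :
    ρ x * (∑ j, (cross3 (grad3 (fun y => Real.log (ρ y)) x) (s x) j + curl3 s x j)
              * pd j (fun y => s y k) x)
      = grad3 (fun y => ρ y * ∑ i, s y i * curl3 s y i) x k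
        + ρ x * cross3 (s x)
            (fun l => lap (fun y => s y l) x
              + ∑ j, pd j (fun y => Real.log (ρ y)) x * pd j (fun y => s y l) x) k
        - (∑ j, s x j * pd j (fun y => ρ y * curl3 s y k) x)
        + cross3 (s x) (grad3 (fun y => ∑ j, s y j * pd j ρ y) x) k := by
  have hρ1 := hρ.differentiableAt two_ne_zero
  have hs1 i := (hs i).differentiableAt two_ne_zero
  have hlog j : pd j ρ x = ρ x * pd j (fun y => Real.log (ρ y)) x := by
    rw [pd_log hρ1 hρx]
    field_simp
  have hgrad : grad3 ρ x = ρ x • grad3 (fun y => Real.log (ρ y)) x := funext hlog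
  have horth := sum_mul_pd_eq_zero_of_sum_sq_eq_const hs1 hc
  have hdivgrad := congrArg (fun v => cross3 (s x) v k)
    (smul_grad3_div3_of_div3_mul_eq_zero hρ hs hdiv)
  have hρh : grad3 (fun y => ρ y * ∑ i, s y i * curl3 s y i) x k
      = pd k ρ x * (∑ i, s x i * curl3 s x i) + ρ x * pd k (fun y => ∑ i, s y i * curl3 s y i) x :=
    pd_mul hρ1 (DifferentiableAt.fun_sum fun i _ => (hs1 i).mul (differentiableAt_curl3 hs i))
  have hρω j : pd j (fun y => ρ y * curl3 s y k) x
      = pd j ρ x * curl3 s x k + ρ x * pd j (fun y => curl3 s y k) x :=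
    pd_mul hρ1 (differentiableAt_curl3 hs k)
  rw [hρh, pd_sum_mul_curl3 hs, curl3_curl3 hs]
  simp only [hρω, add_mul, Finset.sum_add_distrib, sum_cross3_mul_pd_of_sum_mul_pd_eq_zero _ horth]
  simp only [cross3_eq_crossProduct, ← Pi.add_def, map_add, map_sub, map_neg, map_smul,
    Pi.add_apply, Pi.sub_apply, Pi.neg_apply, Pi.smul_apply, smul_eq_mul, hgrad] at hdivgrad ⊢
  simp only [grad3, Fin.sum_univ_three, hlog] at hdivgrad ⊢
  linear_combination -hdivgrad

/-- **Central vector-calculus identity for the spin evolution of a fluid with spin.**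
For smooth `ρ > 0` and a smooth unit vector field `s` with `∇·(ρs) = 0`, setting
`h_s = s·(∇×s)`, one has on Ω:
`ρ [((∇log ρ)×s + ∇×s)·∇] s
  = ∇(ρ h_s) + ρ s×[Δs + ((∇log ρ)·∇)s] - (s·∇)(ρ ∇×s) + s×∇(s·∇ρ)`. -/
theorem spin_advection_identity
    (Ω : Set (Fin 3 → ℝ)) (hΩ : IsOpen Ω)
    (ρ : (Fin 3 → ℝ) → ℝ) (s : (Fin 3 → ℝ) → Fin 3 → ℝ)
    (hρ : ContDiffOn ℝ (⊤ : ℕ∞) ρ Ω) (hρpos : ∀ x ∈ Ω, 0 < ρ x)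
    (hss : ContDiffOn ℝ (⊤ : ℕ∞) s Ω)
    (hunit : ∀ x ∈ Ω, (∑ i, (s x i) ^ 2) = 1)
    (hdiv : ∀ x ∈ Ω, div3 (fun y i => ρ y * s y i) x = 0)
    (hs : (Fin 3 → ℝ) → ℝ)
    (hhs : hs = fun y => ∑ i, s y i * curl3 s y i) :
    ∀ x ∈ Ω, ∀ k,
      ρ x * (∑ j, (cross3 (grad3 (fun y => Real.log (ρ y)) x) (s x) j + curl3 s x j)
                * pd j (fun y => s y k) x)
        = grad3 (fun y => ρ y * hs y) x k
          + ρ x * cross3 (s x)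
              (fun l => lap (fun y => s y l) x
                + ∑ j, pd j (fun y => Real.log (ρ y)) x * pd j (fun y => s y l) x) k
          - (∑ j, s x j * pd j (fun y => ρ y * curl3 s y k) x)
          + cross3 (s x) (grad3 (fun y => ∑ j, s y j * pd j ρ y) x) k := by
  subst hhs
  intro x hx k
  have hΩx : Ω ∈ 𝓝 x := hΩ.mem_nhds hx
  exact spin_advection_identity_at ((hρ.contDiffAt hΩx).of_le (WithTop.coe_le_coe.mpr le_top))
    (hρpos x hx).ne'
    (contDiffAt_pi.mp ((hss.contDiffAt hΩx).of_le (WithTop.coe_le_coe.mpr le_top)))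
    (eventually_of_mem hΩx hunit) (eventually_of_mem hΩx hdiv) k

end
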